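/- arXiv:1805.04638 — 8 statements merged into one kernel-verified Lean document; each statement's English description precedes it below -/
import Mathlib

section
/- Let a ≥ 2 and s, t ≥ 1 be integers. Then gcd(a^s + 1, a^t + 1) equals a^{gcd(s,t)} + 1 if both s/gcd(s,t) and t/gcd(s,t) are odd, and equals gcd(2, a + 1) otherwise. -/
/-!
Modulo `g = gcd(a^s + 1, a^t + 1)` both `a^s` and `a^t` are `-1`. Running Euclid's algorithm on
the exponents keeps the powers of `a` inside `{1, -1}`, so `a^gcd(s,t) = ±1`, and in fact `-1`
because `a^gcd(s,t) = 1` would force `a^s = 1 = -1`. Hence `g ∣ a^gcd(s,t) + 1`, and if one of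
the quotients `s/gcd(s,t)`, `t/gcd(s,t)` is even then `a^s` or `a^t` is also `1`, so `g ∣ 2`.
Conversely `a^gcd(s,t) + 1` divides `a^n + 1` whenever `n/gcd(s,t)` is odd, and `gcd(2, a + 1)`
divides every `a^n + 1`.
-/

section SignedPowers

variable {M : Type*} [Monoid M] [HasDistribNeg M] {x : M}

theorem pow_gcd_eq_one_or_neg_one {m n : ℕ}
    (hm : x ^ m = 1 ∨ x ^ m = -1) (hn : x ^ n = 1 ∨ x ^ n = -1) :
    x ^ m.gcd n = 1 ∨ x ^ m.gcd n = -1 := by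
  induction m, n using Nat.gcd.induction with
  | H0 n => simpa using hn
  | H1 m n _ ih =>
    rw [Nat.gcd_rec]
    refine ih ?_ hm
    have hsign : (x ^ m) ^ (n / m) = 1 ∨ (x ^ m) ^ (n / m) = -1 := by
      rcases hm with h | h <;> simp [h, neg_one_pow_eq_or]
    rw [← Nat.div_add_mod n m, pow_add, pow_mul] at hn
    rcases hsign with h | h <;> rw [h] at hn <;> simpa [or_comm, neg_eq_iff_eq_neg] using hn

theorem pow_gcd_eq_neg_one {m n : ℕ} (hm : x ^ m = -1) (hn : x ^ n = -1) : x ^ m.gcd n = -1 := by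
  rcases pow_gcd_eq_one_or_neg_one (.inr hm) (.inr hn) with h | h
  · -- then `x ^ m = 1`, so `-1 = 1`
    obtain ⟨k, hk⟩ := Nat.gcd_dvd_left m n
    rw [hk, pow_mul, h, one_pow] at hm
    exact h.trans hm
  · exact h

theorem neg_one_eq_one_of_pow_eq_neg_one {d s : ℕ} (hd : x ^ d = -1) (hs : x ^ s = -1)
    (hds : d ∣ s) (heven : Even (s / d)) : (-1 : M) = 1 := by
  rw [← Nat.mul_div_cancel' hds, pow_mul, hd, heven.neg_one_pow] at hs
  exact hs.symm

end SignedPowers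

theorem ZMod.natCast_pow_eq_neg_one_of_dvd {a n k : ℕ} (h : k ∣ a ^ n + 1) :
    (a : ZMod k) ^ n = -1 := by
  rw [← ZMod.natCast_eq_zero_iff] at h
  push_cast at h
  exact eq_neg_of_add_eq_zero_left h

theorem Nat.pow_add_one_dvd_pow_add_one (a : ℕ) {d s : ℕ} (hds : d ∣ s) (hodd : Odd (s / d)) :
    a ^ d + 1 ∣ a ^ s + 1 := by
  simpa [← pow_mul, Nat.mul_div_cancel' hds] using hodd.nat_add_dvd_pow_add_pow (a ^ d) 1

theorem Nat.gcd_pow_add_one_dvd_pow_gcd_add_one (a s t : ℕ) :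
    Nat.gcd (a ^ s + 1) (a ^ t + 1) ∣ a ^ Nat.gcd s t + 1 := by
  rw [← ZMod.natCast_eq_zero_iff]
  push_cast
  rw [pow_gcd_eq_neg_one (ZMod.natCast_pow_eq_neg_one_of_dvd (Nat.gcd_dvd_left _ _))
    (ZMod.natCast_pow_eq_neg_one_of_dvd (Nat.gcd_dvd_right _ _)), neg_add_cancel]

theorem Nat.gcd_pow_add_one_dvd_two {a s t : ℕ}
    (h : ¬(Odd (s / Nat.gcd s t) ∧ Odd (t / Nat.gcd s t))) :
    Nat.gcd (a ^ s + 1) (a ^ t + 1) ∣ 2 := by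
  set g := Nat.gcd (a ^ s + 1) (a ^ t + 1)
  have hs := ZMod.natCast_pow_eq_neg_one_of_dvd (Nat.gcd_dvd_left (a ^ s + 1) (a ^ t + 1))
  have ht := ZMod.natCast_pow_eq_neg_one_of_dvd (Nat.gcd_dvd_right (a ^ s + 1) (a ^ t + 1))
  have hd := pow_gcd_eq_neg_one hs ht
  have hneg : (-1 : ZMod g) = 1 := by
    simp only [not_and_or, Nat.not_odd_iff_even] at h
    rcases h with h | h
    · exact neg_one_eq_one_of_pow_eq_neg_one hd hs (Nat.gcd_dvd_left s t) h
    · exact neg_one_eq_one_of_pow_eq_neg_one hd ht (Nat.gcd_dvd_right s t) h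
  rw [← ZMod.natCast_eq_zero_iff]
  linear_combination -hneg

theorem Nat.gcd_two_pow_add_one (a : ℕ) {n : ℕ} (hn : n ≠ 0) :
    Nat.gcd 2 (a ^ n + 1) = Nat.gcd 2 (a + 1) := by
  rcases Nat.even_or_odd a with ha | ha
  · rw [Nat.Coprime.gcd_eq_one, Nat.Coprime.gcd_eq_one] <;>
      simp [Nat.coprime_two_left, ha, ha.pow_of_ne_zero hn]
  · rw [Nat.gcd_eq_left, Nat.gcd_eq_left] <;> simp [← even_iff_two_dvd, ha, ha.pow]

theorem gcd_pow_add_one_general (a s t : ℕ) (hs : 1 ≤ s) (ht : 1 ≤ t) :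
    Nat.gcd (a ^ s + 1) (a ^ t + 1) =
      if Odd (s / Nat.gcd s t) ∧ Odd (t / Nat.gcd s t) then a ^ Nat.gcd s t + 1
      else Nat.gcd 2 (a + 1) := by
  split_ifs with hodd
  · exact Nat.dvd_antisymm (Nat.gcd_pow_add_one_dvd_pow_gcd_add_one a s t)
      (Nat.dvd_gcd (Nat.pow_add_one_dvd_pow_add_one a (Nat.gcd_dvd_left s t) hodd.1)
        (Nat.pow_add_one_dvd_pow_add_one a (Nat.gcd_dvd_right s t) hodd.2))
  · have hgcd_s := Nat.gcd_two_pow_add_one a (n := s) (by omega)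
    have hgcd_t := Nat.gcd_two_pow_add_one a (n := t) (by omega)
    refine Nat.dvd_antisymm ?_ (Nat.dvd_gcd ?_ ?_)
    · rw [← hgcd_s]
      exact Nat.dvd_gcd (Nat.gcd_pow_add_one_dvd_two hodd) (Nat.gcd_dvd_left _ _)
    · exact hgcd_s ▸ Nat.gcd_dvd_right _ _
    · exact hgcd_t ▸ Nat.gcd_dvd_right _ _

/-- For integers `a ≥ 2`, `s, t ≥ 1`,
`gcd(a^s + 1, a^t + 1) = a^{gcd(s,t)} + 1` if both `s/gcd(s,t)` and `t/gcd(s,t)` are odd,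
and `gcd(a^s + 1, a^t + 1) = gcd(2, a + 1)` otherwise. -/
theorem gcd_pow_add_one (a s t : ℕ) (ha : 2 ≤ a) (hs : 1 ≤ s) (ht : 1 ≤ t) :
    Nat.gcd (a ^ s + 1) (a ^ t + 1) =
      if Odd (s / Nat.gcd s t) ∧ Odd (t / Nat.gcd s t) then a ^ Nat.gcd s t + 1
      else Nat.gcd 2 (a + 1) :=
  gcd_pow_add_one_general a s t hs ht
end

section
/- Let a ≥ 2 and s, t ≥ 1 be integers. Then gcd(a^s − 1, a^t + 1) equals a^{gcd(s,t)} + 1 if s/gcd(s,t) is even and t/gcd(s,t) is odd, and equals gcd(2, a + 1) otherwise. -/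
/-!
Let `g = gcd(a^s - 1, a^t + 1)` and `d = gcd(s, t)`. Modulo `g` the residue `x` of `a` satisfies
`x^s = 1` and `x^t = -1`, hence `x^(2t) = 1` and so `x^gcd(s, 2t) = 1`, where
`gcd(s, 2t) = d · gcd(s/d, 2)`.

If `s/d` is even, then `t/d` is odd and `x^(2d) = 1` gives `x^d = x^t = -1`, so `g ∣ a^d + 1`;
conversely `a^d + 1` divides `a^(2d) - 1`, hence `a^s - 1`, and it divides `a^t + 1` because
`t/d` is odd. If `s/d` is odd, then `x^d = 1`, so `1 = x^t = -1` and `g ∣ 2`; the parity of `a`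
decides between `1` and `2`.
-/

namespace Nat

theorem gcd_two_mul_right (s t : ℕ) : gcd s (2 * t) = gcd s t * gcd (s / gcd s t) 2 := by
  rcases Nat.eq_zero_or_pos (gcd s t) with h0 | hpos
  · obtain ⟨rfl, rfl⟩ := Nat.gcd_eq_zero_iff.1 h0
    simp
  · obtain ⟨s', t', hcop, hs, ht⟩ := exists_coprime s t
    set d := gcd s t
    rw [hs, Nat.mul_div_cancel _ hpos, ht, ← mul_assoc, Nat.gcd_mul_right,
      hcop.symm.gcd_mul_right_cancel_right, mul_comm]

theorem even_pow_sub_one_iff {a s : ℕ} (ha : a ≠ 0) (hs : s ≠ 0) :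
    Even (a ^ s - 1) ↔ Odd a := by
  rw [Nat.even_sub (Nat.one_le_pow _ _ (Nat.pos_of_ne_zero ha)), Nat.even_pow]
  simp [hs, Nat.not_even_iff_odd]

theorem pow_add_one_dvd_pow_sub_one (a : ℕ) {d s : ℕ} (hds : d ∣ s) (h : Even (s / d)) :
    a ^ d + 1 ∣ a ^ s - 1 := by
  obtain ⟨k, hk⟩ := h
  have hs : s = 2 * d * k := by rw [← Nat.mul_div_cancel' hds, hk]; ring
  have hsq : a ^ (2 * d) - 1 = (a ^ d + 1) * (a ^ d - 1) := by
    rw [mul_comm, pow_mul, ← Nat.sq_sub_sq, one_pow]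
  exact (Dvd.intro _ hsq.symm).trans (pow_sub_one_dvd_pow_sub_one a (hs ▸ dvd_mul_right _ k))

theorem pow_add_one_dvd_pow_add_one_s10 (a : ℕ) {d t : ℕ} (hdt : d ∣ t) (h : Odd (t / d)) :
    a ^ d + 1 ∣ a ^ t + 1 := by
  simpa [← pow_mul, Nat.mul_div_cancel' hdt] using Odd.nat_add_dvd_pow_add_pow (a ^ d) 1 h

theorem gcd_pow_sub_one_pow_add_one_of_dvd_two {a s : ℕ} (t : ℕ) (ha : a ≠ 0) (hs : s ≠ 0)
    (h : gcd (a ^ s - 1) (a ^ t + 1) ∣ 2) : gcd (a ^ s - 1) (a ^ t + 1) = gcd 2 (a + 1) := by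
  rcases Nat.even_or_odd a with heven | hodd
  · have hsub : Odd (a ^ s - 1) := Nat.not_even_iff_odd.1 <|
      mt (even_pow_sub_one_iff ha hs).1 (Nat.not_odd_iff_even.2 heven)
    rw [(Nat.coprime_two_left.2 heven.add_one).gcd_eq_one]
    exact (Nat.coprime_two_right.2 (hsub.of_dvd_nat (gcd_dvd_left _ _))).eq_one_of_dvd h
  · rw [Nat.gcd_eq_left (even_iff_two_dvd.1 hodd.add_one)]
    exact dvd_antisymm h <| dvd_gcd (even_iff_two_dvd.1 ((even_pow_sub_one_iff ha hs).2 hodd))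
      (even_iff_two_dvd.1 hodd.pow.add_one)

end Nat

section Monoid

variable {M : Type*} [Monoid M] [HasDistribNeg M] {x : M} {s t : ℕ}

theorem pow_gcd_two_mul_eq_one (hs : x ^ s = 1) (ht : x ^ t = -1) : x ^ s.gcd (2 * t) = 1 :=
  pow_gcd_eq_one.2 ⟨hs, by rw [pow_mul', ht, neg_one_sq]⟩

theorem pow_gcd_eq_one_of_odd (hs : x ^ s = 1) (ht : x ^ t = -1) (h : Odd (s / s.gcd t)) :
    x ^ s.gcd t = 1 := by
  simpa [Nat.gcd_two_mul_right, (Nat.coprime_two_right.2 h).gcd_eq_one] using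
    pow_gcd_two_mul_eq_one hs ht

theorem pow_gcd_eq_neg_one_of_even_of_odd (hs : x ^ s = 1) (ht : x ^ t = -1)
    (hs' : Even (s / s.gcd t)) (ht' : Odd (t / s.gcd t)) : x ^ s.gcd t = -1 := by
  have h2 : x ^ (s.gcd t * 2) = 1 := by
    simpa [Nat.gcd_two_mul_right, Nat.gcd_eq_right (even_iff_two_dvd.1 hs')] using
      pow_gcd_two_mul_eq_one hs ht
  obtain ⟨k, hk⟩ := ht'
  have htk : t = s.gcd t * 2 * k + s.gcd t := by
    have := Nat.mul_div_cancel' (Nat.gcd_dvd_right s t)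
    rw [hk] at this
    linarith
  calc x ^ s.gcd t = (x ^ (s.gcd t * 2)) ^ k * x ^ s.gcd t := by rw [h2, one_pow, one_mul]
    _ = x ^ t := by rw [← pow_mul, ← pow_add, ← htk]
    _ = -1 := ht

end Monoid

theorem two_eq_zero_of_pow_eq_one_of_pow_eq_neg_one {R : Type*} [CommRing R] {x : R} {s t : ℕ}
    (hs : x ^ s = 1) (ht : x ^ t = -1) (h : Odd (s / s.gcd t)) : (2 : R) = 0 := by
  have h1 : x ^ t = 1 := by
    rw [← Nat.mul_div_cancel' (Nat.gcd_dvd_right s t), pow_mul, pow_gcd_eq_one_of_odd hs ht h,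
      one_pow]
  rw [ht] at h1
  linear_combination -h1

theorem gcd_pow_sub_one_pow_add_one_general (a s t : ℕ) (ha : 2 ≤ a) (hs : 1 ≤ s) :
    Nat.gcd (a ^ s - 1) (a ^ t + 1) =
      if Even (s / Nat.gcd s t) ∧ Odd (t / Nat.gcd s t) then a ^ Nat.gcd s t + 1
      else Nat.gcd 2 (a + 1) := by
  set g := Nat.gcd (a ^ s - 1) (a ^ t + 1)
  have hxs : (a : ZMod g) ^ s = 1 := by
    have := (Nat.modEq_iff_dvd' (Nat.one_le_pow s a (by omega))).2
      (Nat.gcd_dvd_left _ (a ^ t + 1))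
    exact_mod_cast ((ZMod.natCast_eq_natCast_iff _ _ _).2 this).symm
  have hxt : (a : ZMod g) ^ t = -1 := by
    have := (ZMod.natCast_eq_zero_iff _ g).2 (Nat.gcd_dvd_right _ _)
    push_cast at this
    exact eq_neg_of_add_eq_zero_left this
  split_ifs with h
  · obtain ⟨heven, hodd⟩ := h
    refine Nat.dvd_antisymm ?_ (Nat.dvd_gcd (Nat.pow_add_one_dvd_pow_sub_one a
      (Nat.gcd_dvd_left s t) heven) (Nat.pow_add_one_dvd_pow_add_one_s10 a (Nat.gcd_dvd_right s t) hodd))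
    rw [← ZMod.natCast_eq_zero_iff]
    push_cast
    rw [pow_gcd_eq_neg_one_of_even_of_odd hxs hxt heven hodd, neg_add_cancel]
  · have hodd : Odd (s / Nat.gcd s t) := by
      refine Nat.not_even_iff_odd.1 fun heven => h ⟨heven, ?_⟩
      exact ((Nat.coprime_div_gcd_div_gcd (Nat.gcd_pos_of_pos_left t hs)).coprime_dvd_left
        (even_iff_two_dvd.1 heven)).odd_of_left
    refine Nat.gcd_pow_sub_one_pow_add_one_of_dvd_two t (by omega) (by omega) ?_
    rw [← ZMod.natCast_eq_zero_iff]
    exact_mod_cast two_eq_zero_of_pow_eq_one_of_pow_eq_neg_one hxs hxt hodd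

/-- For integers `a ≥ 2`, `s, t ≥ 1`,
`gcd(a^s - 1, a^t + 1) = a^{gcd(s,t)} + 1` if `s/gcd(s,t)` is even and `t/gcd(s,t)` is odd,
and `gcd(a^s - 1, a^t + 1) = gcd(2, a + 1)` otherwise. -/
theorem gcd_pow_sub_one_pow_add_one (a s t : ℕ) (ha : 2 ≤ a) (hs : 1 ≤ s) (ht : 1 ≤ t) :
    Nat.gcd (a ^ s - 1) (a ^ t + 1) =
      if Even (s / Nat.gcd s t) ∧ Odd (t / Nat.gcd s t) then a ^ Nat.gcd s t + 1
      else Nat.gcd 2 (a + 1) :=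
  gcd_pow_sub_one_pow_add_one_general a s t ha hs
end

section
/- Let a ≥ 2 be an integer and let l, n ≥ 1 be integers with gcd(l, n) = 1. Then (a^n − 1)/(a − 1) divides (a^{ln} − 1)/(a^l − 1); equivalently, (a^n − 1)·(a^l − 1) divides (a^{ln} − 1)·(a − 1). -/
/-! Since `gcd (a ^ m - 1) (a ^ n - 1) = a ^ gcd m n - 1` and both factors divide `a ^ (m * n) - 1`,
their product, which is `gcd * lcm`, divides `(a ^ (m * n) - 1) * (a ^ gcd m n - 1)`. For coprime
exponents the second factor is `a - 1`, and dividing out `a - 1` and `a ^ l - 1` gives the quotient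
form. -/

namespace Nat

theorem pow_sub_one_mul_pow_sub_one_dvd (a m n : ℕ) :
    (a ^ m - 1) * (a ^ n - 1) ∣ (a ^ (m * n) - 1) * (a ^ gcd m n - 1) := by
  rw [← gcd_mul_lcm, pow_sub_one_gcd_pow_sub_one, mul_comm]
  exact mul_dvd_mul_right (lcm_dvd (pow_sub_one_dvd_pow_sub_one a (dvd_mul_right m n))
    (pow_sub_one_dvd_pow_sub_one a (dvd_mul_left n m))) _

theorem div_dvd_div_of_mul_dvd_mul {d p q x : ℕ} (hd : 0 < d) (hdp : d ∣ p) (hqx : q ∣ x)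
    (h : p * q ∣ x * d) : p / d ∣ x / q := by
  rw [dvd_div_iff_mul_dvd hqx, ← Nat.mul_dvd_mul_iff_right hd]
  calc q * (p / d) * d = p * q := by rw [mul_assoc, Nat.div_mul_cancel hdp, mul_comm]
    _ ∣ x * d := h

end Nat

theorem quotient_divides_quotient_general (a l n : ℕ) (ha : 2 ≤ a)
    (hcop : Nat.gcd l n = 1) :
    (a ^ n - 1) / (a - 1) ∣ (a ^ (l * n) - 1) / (a ^ l - 1) ∧
      (a ^ n - 1) * (a ^ l - 1) ∣ (a ^ (l * n) - 1) * (a - 1) := by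
  have hprod : (a ^ n - 1) * (a ^ l - 1) ∣ (a ^ (l * n) - 1) * (a - 1) := by
    simpa [mul_comm l n, Nat.gcd_comm n l, hcop] using Nat.pow_sub_one_mul_pow_sub_one_dvd a n l
  exact ⟨Nat.div_dvd_div_of_mul_dvd_mul (by omega) (Nat.sub_one_dvd_pow_sub_one a n)
    (Nat.pow_sub_one_dvd_pow_sub_one a (dvd_mul_right l n)) hprod, hprod⟩

/-- For `a ≥ 2` and `l, n ≥ 1` with `gcd(l, n) = 1`,
`(a^n - 1)/(a - 1)` divides `(a^{ln} - 1)/(a^l - 1)`; equivalently,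
`(a^n - 1)(a^l - 1)` divides `(a^{ln} - 1)(a - 1)`. -/
theorem quotient_divides_quotient (a l n : ℕ) (ha : 2 ≤ a) (hl : 1 ≤ l) (hn : 1 ≤ n)
    (hcop : Nat.gcd l n = 1) :
    (a ^ n - 1) / (a - 1) ∣ (a ^ (l * n) - 1) / (a ^ l - 1) ∧
      (a ^ n - 1) * (a ^ l - 1) ∣ (a ^ (l * n) - 1) * (a - 1) :=
  quotient_divides_quotient_general a l n ha hcop
end

section
/- Let p be a prime, n ≥ 2 an integer, and l an odd positive integer with gcd(l, n) = 1. Set d = gcd(n, p^l − 1). Then d·(p^l − 1) divides p^{ln} − 1, and gcd(p^n − 1, (p^{ln} − 1)/(d·(p^l − 1))) ≥ (p^n − 1)/(n·(p − 1)). -/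
/-! Write `a = p^n - 1`, `b = gcd(n, p^l - 1) (p^l - 1)` and `M = (p^{ln} - 1)/b`.
Since `p^{ln} - 1 = (p^l - 1) ∑ p^{li}` and the sum is `≡ n` modulo `p^l - 1`, `b` divides
`p^{ln} - 1`. As `a ∣ p^{ln} - 1 = M b`, we get `a ∣ gcd(a, M) gcd(a, b)`, and
`gcd(a, b) ∣ n gcd(p^n - 1, p^l - 1) = n (p^{gcd(n, l)} - 1) = n (p - 1)`. -/

open Finset

namespace Nat

theorem gcd_mul_sub_one_dvd_pow_sub_one (q n : ℕ) : gcd n (q - 1) * (q - 1) ∣ q ^ n - 1 := by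
  rcases q.eq_zero_or_pos with rfl | hq
  · cases n <;> simp
  rw [← geom_sum_mul_of_one_le hq n]
  refine mul_dvd_mul ?_ dvd_rfl
  have hsum : ∑ i ∈ range n, q ^ i ≡ n [MOD q - 1] := by
    simpa using ModEq.sum (s := range n) fun i _ ↦ (modEq_sub hq).pow i
  exact (hsum.dvd_iff (gcd_dvd_right _ _)).mpr (gcd_dvd_left _ _)

theorem gcd_pow_sub_one_mul_dvd_of_coprime {p n l : ℕ} (m : ℕ) (hcop : gcd l n = 1) :
    gcd (p ^ n - 1) (m * (p ^ l - 1)) ∣ m * (p - 1) := by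
  have hgcd : gcd (p ^ n - 1) (p ^ l - 1) = p - 1 := by
    rw [pow_sub_one_gcd_pow_sub_one, gcd_comm, hcop, pow_one]
  calc gcd (p ^ n - 1) (m * (p ^ l - 1))
      ∣ gcd (p ^ n - 1) m * gcd (p ^ n - 1) (p ^ l - 1) := gcd_mul_dvd_mul_gcd _ _ _
    _ ∣ m * (p - 1) := mul_dvd_mul (gcd_dvd_right _ _) hgcd.dvd

theorem cast_div_le_gcd_of_dvd_gcd_mul {a m c : ℕ} (h : a ∣ gcd a m * c) :
    (a : ℝ) / c ≤ gcd a m := by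
  rcases a.eq_zero_or_pos with rfl | ha
  · simp
  rcases c.eq_zero_or_pos with rfl | hc
  · simp
  rw [div_le_iff₀ (by positivity)]
  exact_mod_cast le_of_dvd (mul_pos (gcd_pos_of_pos_left m ha) hc) h

end Nat

theorem gcd_torus_order_lower_bound_general (p n l : ℕ) (hp : p.Prime)
    (hcop : Nat.gcd l n = 1) :
    Nat.gcd n (p ^ l - 1) * (p ^ l - 1) ∣ p ^ (l * n) - 1 ∧
      ((Nat.gcd (p ^ n - 1)
          ((p ^ (l * n) - 1) / (Nat.gcd n (p ^ l - 1) * (p ^ l - 1)))) : ℝ) ≥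
        ((p ^ n - 1 : ℕ) : ℝ) / ((n : ℝ) * ((p : ℝ) - 1)) := by
  set b := Nat.gcd n (p ^ l - 1) * (p ^ l - 1)
  have hb : b ∣ p ^ (l * n) - 1 := pow_mul p l n ▸ Nat.gcd_mul_sub_one_dvd_pow_sub_one (p ^ l) n
  refine ⟨hb, ?_⟩
  have hMb : p ^ n - 1 ∣ (p ^ (l * n) - 1) / b * b := by
    rw [Nat.div_mul_cancel hb]
    exact Nat.pow_sub_one_dvd_pow_sub_one p (dvd_mul_left n l)
  have hgcd_b : Nat.gcd (p ^ n - 1) b ∣ n * (p - 1) :=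
    (Nat.gcd_pow_sub_one_mul_dvd_of_coprime _ hcop).trans
      (mul_dvd_mul_right (Nat.gcd_dvd_left _ _) _)
  have hdvd := (Nat.dvd_gcd_mul_gcd_iff_dvd_mul.mpr hMb).trans (mul_dvd_mul_left _ hgcd_b)
  have hcast : (n : ℝ) * ((p : ℝ) - 1) = ((n * (p - 1) : ℕ) : ℝ) := by
    push_cast [hp.one_le]; rfl
  rw [hcast]
  exact Nat.cast_div_le_gcd_of_dvd_gcd_mul hdvd

/-- Let `p` be prime, `n ≥ 2`, `l` odd with `gcd(l, n) = 1`, and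
`d = gcd(n, p^l - 1)`.  Then `d (p^l - 1)` divides `p^{ln} - 1` and
`gcd(p^n - 1, (p^{ln} - 1)/(d (p^l - 1))) ≥ (p^n - 1)/(n (p - 1))`. -/
theorem gcd_torus_order_lower_bound (p n l : ℕ) (hp : p.Prime) (hn : 2 ≤ n)
    (hl : Odd l) (hcop : Nat.gcd l n = 1) :
    Nat.gcd n (p ^ l - 1) * (p ^ l - 1) ∣ p ^ (l * n) - 1 ∧
      ((Nat.gcd (p ^ n - 1)
          ((p ^ (l * n) - 1) / (Nat.gcd n (p ^ l - 1) * (p ^ l - 1)))) : ℝ) ≥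
        ((p ^ n - 1 : ℕ) : ℝ) / ((n : ℝ) * ((p : ℝ) - 1)) :=
  gcd_torus_order_lower_bound_general p n l hp hcop
end

section
/- Let q ≥ 2 and M ≥ 1 be integers and let n ≥ 4. Then the sum over all pairs of integers 0 ≤ l < k ≤ n − 1 of gcd((q^n − 1)/(q − 1), M·(q^{k−l} − 1)) is at most n²·M·q^{⌊n/2⌋}; in particular it is at most n²·M·q^{n/2}. -/
/-!
Put `d = k - l`, so `1 ≤ d < n`. Since `(q^n - 1)/(q - 1)` divides `q^n - 1`, each summand
divides `M · gcd(q^n - 1, q^d - 1) = M (q^{gcd(n,d)} - 1)`, and `gcd(n,d)` is a proper divisor of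
`n`, hence at most `⌊n/2⌋`. So each of the fewer than `n²` summands is at most `M q^{⌊n/2⌋}`.
-/

namespace Nat

theorem le_div_two_of_dvd_of_lt {m n : ℕ} (hmn : m ∣ n) (hlt : m < n) : m ≤ n / 2 := by
  obtain ⟨c, rfl⟩ := hmn
  rw [le_div_iff_mul_le two_pos]
  have : 2 ≤ c := by
    by_contra! h
    interval_cases c <;> simp at hlt
  exact mul_le_mul_left m this

theorem gcd_le_div_two_of_pos_of_lt {n d : ℕ} (hd : 0 < d) (hdn : d < n) : gcd n d ≤ n / 2 :=
  le_div_two_of_dvd_of_lt (gcd_dvd_left n d) ((gcd_le_right n hd).trans_lt hdn)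

theorem gcd_pow_sub_one_div_sub_one_dvd (q n d : ℕ) :
    gcd ((q ^ n - 1) / (q - 1)) (q ^ d - 1) ∣ q ^ gcd n d - 1 := by
  rw [← pow_sub_one_gcd_pow_sub_one]
  exact gcd_dvd_gcd_of_dvd_left _ (div_dvd_of_dvd (sub_one_dvd_pow_sub_one q n))

theorem gcd_pow_sub_one_div_sub_one_mul_le {q n d : ℕ} (M : ℕ) (hq : 2 ≤ q) (hM : 1 ≤ M)
    (hd : 0 < d) (hdn : d < n) :
    gcd ((q ^ n - 1) / (q - 1)) (M * (q ^ d - 1)) ≤ M * q ^ (n / 2) := by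
  have hpos : 0 < q ^ gcd n d - 1 :=
    Nat.sub_pos_of_lt (one_lt_pow (gcd_pos_of_pos_right n hd).ne' hq)
  calc gcd ((q ^ n - 1) / (q - 1)) (M * (q ^ d - 1))
      ≤ M * (q ^ gcd n d - 1) :=
        le_of_dvd (mul_pos hM hpos) ((gcd_mul_right_dvd_mul_gcd _ M _).trans
          (mul_dvd_mul (gcd_dvd_right _ M) (gcd_pow_sub_one_div_sub_one_dvd q n d)))
    _ ≤ M * q ^ (n / 2) := mul_le_mul_left M
        ((sub_le _ 1).trans (Nat.pow_le_pow_right (by omega) (gcd_le_div_two_of_pos_of_lt hd hdn)))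

end Nat

theorem Finset.sum_range_sum_range_le_sq_mul {n C : ℕ} (f : ℕ → ℕ → ℕ)
    (hf : ∀ k < n, ∀ l < k, f k l ≤ C) :
    ∑ k ∈ Finset.range n, ∑ l ∈ Finset.range k, f k l ≤ n ^ 2 * C :=
  calc ∑ k ∈ Finset.range n, ∑ l ∈ Finset.range k, f k l
      ≤ ∑ k ∈ Finset.range n, ∑ _l ∈ Finset.range n, C := by
        refine Finset.sum_le_sum fun k hk => ?_
        rw [Finset.mem_range] at hk
        exact (Finset.sum_le_sum fun l hl => hf k hk l (Finset.mem_range.1 hl)).trans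
          (Finset.sum_le_sum_of_subset (Finset.range_subset_range.2 hk.le))
    _ = n ^ 2 * C := by simp [sq, mul_assoc]

theorem Real.pow_div_two_le_rpow {x : ℝ} (hx : 1 ≤ x) (n : ℕ) :
    x ^ (n / 2) ≤ x ^ ((n : ℝ) / 2) := by
  rw [← Real.rpow_natCast]
  refine Real.rpow_le_rpow_of_exponent_le hx ?_
  rw [le_div_iff₀ two_pos]
  exact_mod_cast Nat.div_mul_le_self n 2

theorem sum_gcd_nonregular_bound_general (q M n : ℕ) (hq : 2 ≤ q) (hM : 1 ≤ M) :
    (∑ k ∈ Finset.range n, ∑ l ∈ Finset.range k,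
        Nat.gcd ((q ^ n - 1) / (q - 1)) (M * (q ^ (k - l) - 1))) ≤
      n ^ 2 * M * q ^ (n / 2) ∧
    ((∑ k ∈ Finset.range n, ∑ l ∈ Finset.range k,
        Nat.gcd ((q ^ n - 1) / (q - 1)) (M * (q ^ (k - l) - 1)) : ℕ) : ℝ) ≤
      (n : ℝ) ^ 2 * (M : ℝ) * (q : ℝ) ^ ((n : ℝ) / 2) := by
  have hnat : (∑ k ∈ Finset.range n, ∑ l ∈ Finset.range k,
      Nat.gcd ((q ^ n - 1) / (q - 1)) (M * (q ^ (k - l) - 1))) ≤ n ^ 2 * M * q ^ (n / 2) := by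
    rw [mul_assoc]
    exact Finset.sum_range_sum_range_le_sq_mul _ fun k hk l hl =>
      Nat.gcd_pow_sub_one_div_sub_one_mul_le M hq hM (by omega) (by omega)
  refine ⟨hnat, ?_⟩
  calc _ ≤ ((n ^ 2 * M * q ^ (n / 2) : ℕ) : ℝ) := by exact_mod_cast hnat
    _ = (n : ℝ) ^ 2 * M * (q : ℝ) ^ (n / 2) := by push_cast; ring
    _ ≤ (n : ℝ) ^ 2 * M * (q : ℝ) ^ ((n : ℝ) / 2) := by
      gcongr
      exact Real.pow_div_two_le_rpow (by exact_mod_cast (by omega : 1 ≤ q)) n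

/-- For integers `q ≥ 2`, `M ≥ 1`, `n ≥ 4`, the sum over pairs
`0 ≤ l < k ≤ n - 1` of `gcd((q^n - 1)/(q - 1), M (q^{k-l} - 1))` is at most
`n² M q^{⌊n/2⌋}`; in particular it is at most `n² M q^{n/2}`. -/
theorem sum_gcd_nonregular_bound (q M n : ℕ) (hq : 2 ≤ q) (hM : 1 ≤ M) (hn : 4 ≤ n) :
    (∑ k ∈ Finset.range n, ∑ l ∈ Finset.range k,
        Nat.gcd ((q ^ n - 1) / (q - 1)) (M * (q ^ (k - l) - 1))) ≤
      n ^ 2 * M * q ^ (n / 2) ∧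
    ((∑ k ∈ Finset.range n, ∑ l ∈ Finset.range k,
        Nat.gcd ((q ^ n - 1) / (q - 1)) (M * (q ^ (k - l) - 1)) : ℕ) : ℝ) ≤
      (n : ℝ) ^ 2 * (M : ℝ) * (q : ℝ) ^ ((n : ℝ) / 2) :=
  sum_gcd_nonregular_bound_general q M n hq hM
end

section
/- Let M be a positive integer. There exists a positive constant N depending only on M such that the following holds: for every prime power q and every integer n ≥ 2 with |SL_n(F_q)| ≥ N, if F is a finite field with q^n elements, then the set S = { λ^M : λ ∈ F^×, λ^{(q^n−1)/(q−1)} = 1, and λ^{M·q^k} ≠ λ^{M·q^l} for all 0 ≤ l < k ≤ n−1 } has cardinality at least (q^n − 1)/(2·M·(q − 1)). (The elements of S are exactly the regular semisimple values of the power word x^M on a maximal torus of SL_n(q) corresponding to the partition n of n.) -/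
/-!
Inside the cyclic group `F^×` of order `q^n - 1`, the Singer torus is the subgroup `T` of order
`P = 1 + q + ⋯ + q^(n-1) = (q^n - 1)/(q - 1)`, and the Frobenius acts as `x ↦ x^q`. An element
`λ ∈ T` fails to be regular when `λ^(M q^l (q^(k-l) - 1)) = 1` for some `l < k < n`; as `q` is prime
to `P`, there are at most `M · gcd(q^(k-l) - 1, P) ≤ M (q^gcd(k-l, n) - 1) ≤ M q^(n/2)` such `λ`.
Summing over fewer than `n²` pairs, at least half of `T` is regular as soon as
`2 M n² ≤ q^((n-1)/2)`; for `n = 2` one uses `gcd(q - 1, q + 1) ≤ 2` instead. Finally `x ↦ x^M`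
is at most `M`-to-one. Since `|SL_n(q)| ≤ q^(n²)`, a large `|SL_n(q)|` forces either `n` large,
where the exponential `q^((n-1)/2)` beats `2 M n²`, or `q` large.
-/

open Finset

theorem Nat.le_div_two_of_dvd_of_lt_s14 {d n : ℕ} (hdn : d ∣ n) (hlt : d < n) : d ≤ n / 2 := by
  obtain ⟨t, rfl⟩ := hdn
  have ht : 2 ≤ t := by
    rcases t with _ | _ | t
    · simp at hlt
    · simp at hlt
    · omega
  rw [Nat.le_div_iff_mul_le two_pos]
  exact Nat.mul_le_mul_left d ht

theorem Nat.gcd_pow_sub_one_le_pow_half {q n d P : ℕ} (hq : 2 ≤ q) (hP : P ∣ q ^ n - 1)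
    (hd : 0 < d) (hdn : d < n) : Nat.gcd (q ^ d - 1) P ≤ q ^ (n / 2) := by
  have hg : 0 < Nat.gcd d n := Nat.gcd_pos_of_pos_left n hd
  have hdvd : Nat.gcd (q ^ d - 1) P ∣ q ^ Nat.gcd d n - 1 := by
    rw [← Nat.pow_sub_one_gcd_pow_sub_one]
    exact Nat.gcd_dvd_gcd_of_dvd_right _ hP
  have hpos : 0 < q ^ Nat.gcd d n - 1 := by
    have := Nat.le_self_pow hg.ne' q
    omega
  calc Nat.gcd (q ^ d - 1) P ≤ q ^ Nat.gcd d n - 1 := Nat.le_of_dvd hpos hdvd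
    _ ≤ q ^ Nat.gcd d n := Nat.sub_le _ _
    _ ≤ q ^ (n / 2) := Nat.pow_le_pow_right (by omega)
        (Nat.le_div_two_of_dvd_of_lt_s14 (Nat.gcd_dvd_right d n)
          ((Nat.gcd_le_left n hd).trans_lt hdn))

theorem Nat.gcd_mul_le_mul_gcd_of_coprime {M c m P : ℕ} (hM : 0 < M) (hP : 0 < P)
    (hc : Nat.Coprime c P) : Nat.gcd (M * (c * m)) P ≤ M * Nat.gcd m P := by
  have hdvd : Nat.gcd P (M * (c * m)) ∣ Nat.gcd P M * Nat.gcd P m := by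
    rw [← hc.gcd_mul_left_cancel_right m]
    exact gcd_mul_dvd_mul_gcd P M (c * m)
  rw [Nat.gcd_comm, Nat.gcd_comm m]
  calc Nat.gcd P (M * (c * m)) ≤ Nat.gcd P M * Nat.gcd P m :=
        Nat.le_of_dvd (Nat.mul_pos (Nat.gcd_pos_of_pos_left _ hP) (Nat.gcd_pos_of_pos_left _ hP))
          hdvd
    _ ≤ M * Nat.gcd P m := Nat.mul_le_mul_right _ (Nat.gcd_le_right (m := P) hM)

theorem Nat.pow_three_le_two_pow {k : ℕ} (hk : 10 ≤ k) : k ^ 3 ≤ 2 ^ k := by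
  induction k, hk using Nat.le_induction with
  | base => norm_num
  | succ m hm ih =>
    calc (m + 1) ^ 3 ≤ 2 * m ^ 3 := by nlinarith [sq_nonneg m]
      _ ≤ 2 * 2 ^ m := Nat.mul_le_mul_left 2 ih
      _ = 2 ^ (m + 1) := by ring

theorem Nat.coprime_geom_sum {q n : ℕ} (hn : n ≠ 0) : Nat.Coprime q (∑ i ∈ range n, q ^ i) := by
  obtain ⟨n, rfl⟩ := Nat.exists_eq_succ_of_ne_zero hn
  have : ∑ i ∈ range (n + 1), q ^ i = 1 + q * ∑ i ∈ range n, q ^ i := by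
    rw [sum_range_succ', mul_sum]; simp [pow_succ', add_comm]
  rw [this, Nat.coprime_add_mul_left_right]
  exact Nat.coprime_one_right q

section CyclicGroup

variable {G : Type*} [CommGroup G] [Fintype G] [DecidableEq G] [IsCyclic G]

theorem IsCyclic.card_le_mul_card_image_pow (s : Finset G) {M : ℕ} (hM : 0 < M) :
    #s ≤ M * #(s.image (· ^ M)) := by
  refine card_le_mul_card_image s M fun y hy ↦ ?_
  obtain ⟨x₀, -, rfl⟩ := mem_image.1 hy
  calc #{x ∈ s | x ^ M = x₀ ^ M} ≤ #{z : G | z ^ M = 1} := by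
        refine card_le_card_of_injOn (· / x₀) (fun x hx ↦ ?_) div_left_injective.injOn
        simp [div_pow, (mem_filter.1 (mem_coe.1 hx)).2]
    _ ≤ M := by convert IsCyclic.card_pow_eq_one_le (α := G) hM using 2

theorem IsCyclic.card_filter_pow_eq_one_of_dvd {P : ℕ} (hP : P ∣ Fintype.card G) :
    #{x : G | x ^ P = 1} = P := by
  obtain ⟨m, hm⟩ := hP
  have hm0 : 0 < m := Nat.pos_of_ne_zero (by rintro rfl; simp at hm)
  have hP0 : 0 < P := Nat.pos_of_ne_zero (by rintro rfl; simp at hm)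
  refine le_antisymm (by convert IsCyclic.card_pow_eq_one_le (α := G) hP0 using 2) ?_
  -- the `m`-th power map sends `G` into `{x | x ^ P = 1}` and is at most `m`-to-one
  have himage : (univ : Finset G).image (· ^ m) ⊆ ({x : G | x ^ P = 1} : Finset G) := by
    intro y hy
    obtain ⟨x, -, rfl⟩ := mem_image.1 hy
    simp [← pow_mul, mul_comm m, ← hm, pow_card_eq_one]
  have := (card_le_mul_card_image_pow univ hm0).trans
    (Nat.mul_le_mul_left m (card_le_card himage))
  rw [card_univ, hm, mul_comm] at this
  exact Nat.le_of_mul_le_mul_left this hm0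

theorem IsCyclic.card_filter_pow_eq_one_and_pow_eq_one_le {a b : ℕ} (hb : 0 < b) :
    #{x : G | x ^ a = 1 ∧ x ^ b = 1} ≤ Nat.gcd a b := by
  simp_rw [← pow_gcd_eq_one]
  convert IsCyclic.card_pow_eq_one_le (α := G) (Nat.gcd_pos_of_pos_right a hb) using 2

end CyclicGroup

namespace SingerTorus

variable {G : Type*} [CommGroup G] [Fintype G] [DecidableEq G]

variable (G) in
def coincidences (P M q k l : ℕ) : Finset G :=
  {x | x ^ P = 1 ∧ x ^ (M * q ^ k) = x ^ (M * q ^ l)}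

variable (G) in
def regular (P M q n : ℕ) : Finset G :=
  {x | x ^ P = 1 ∧ ∀ k < n, ∀ l < k, x ^ (M * q ^ k) ≠ x ^ (M * q ^ l)}

theorem coe_image_pow_regular (P M q n : ℕ) :
    (((regular G P M q n).image (· ^ M) : Finset G) : Set G) = {y | ∃ x : G, x ^ P = 1 ∧
      (∀ k l : ℕ, l < k → k ≤ n - 1 → x ^ (M * q ^ k) ≠ x ^ (M * q ^ l)) ∧ y = x ^ M} := by
  ext y
  simp only [regular, coe_image, coe_filter, mem_univ, true_and, Set.mem_image]
  refine exists_congr fun x ↦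
    ⟨fun ⟨⟨hP, hreg⟩, hy⟩ ↦ ⟨hP, fun k l hlk hk ↦ hreg k (by omega) l hlk, hy.symm⟩,
      fun ⟨hP, hreg, hy⟩ ↦ ⟨⟨hP, fun k hk l hlk ↦ hreg k l hlk (by omega)⟩, hy.symm⟩⟩

theorem card_torus_le (P M q n : ℕ) :
    #({x : G | x ^ P = 1} : Finset G) ≤
      #(regular G P M q n) + ∑ k ∈ range n, ∑ l ∈ range k, #(coincidences G P M q k l) := by
  have hcover : ({x : G | x ^ P = 1} : Finset G) ⊆ regular G P M q n ∪
      (range n).biUnion fun k ↦ (range k).biUnion fun l ↦ coincidences G P M q k l := by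
    intro x hx
    rw [mem_filter] at hx
    by_cases hreg : ∀ k < n, ∀ l < k, x ^ (M * q ^ k) ≠ x ^ (M * q ^ l)
    · exact mem_union_left _ (mem_filter.2 ⟨mem_univ x, hx.2, hreg⟩)
    · push Not at hreg
      obtain ⟨k, hk, l, hl, heq⟩ := hreg
      refine mem_union_right _ (mem_biUnion.2 ⟨k, mem_range.2 hk, ?_⟩)
      exact mem_biUnion.2 ⟨l, mem_range.2 hl, mem_filter.2 ⟨mem_univ x, hx.2, heq⟩⟩
  refine (card_le_card hcover).trans ((card_union_le _ _).trans (Nat.add_le_add_left ?_ _))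
  exact card_biUnion_le.trans (sum_le_sum fun k _ ↦ card_biUnion_le)

variable [IsCyclic G]

theorem card_coincidences_le {P M q k l : ℕ} (hP : 0 < P) (hM : 0 < M) (hq : 0 < q)
    (hqP : Nat.Coprime q P) (hlk : l ≤ k) :
    #(coincidences G P M q k l) ≤ M * Nat.gcd (q ^ (k - l) - 1) P := by
  have hexp : M * q ^ k - M * q ^ l = M * (q ^ l * (q ^ (k - l) - 1)) := by
    rw [Nat.mul_sub_one, ← pow_add, Nat.add_sub_cancel' hlk, Nat.mul_sub]
  have hsub : coincidences G P M q k l ⊆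
      ({x : G | x ^ (M * (q ^ l * (q ^ (k - l) - 1))) = 1 ∧ x ^ P = 1} : Finset G) := by
    intro x hx
    simp only [coincidences, mem_filter, mem_univ, true_and] at hx ⊢
    refine ⟨?_, hx.1⟩
    rw [← hexp, pow_sub x (Nat.mul_le_mul_left M (Nat.pow_le_pow_right hq hlk)), hx.2,
      mul_inv_cancel]
  calc #(coincidences G P M q k l)
      ≤ Nat.gcd (M * (q ^ l * (q ^ (k - l) - 1))) P :=
        (card_le_card hsub).trans (IsCyclic.card_filter_pow_eq_one_and_pow_eq_one_le hP)
    _ ≤ M * Nat.gcd (q ^ (k - l) - 1) P :=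
        Nat.gcd_mul_le_mul_gcd_of_coprime hM hP (hqP.pow_left l)

theorem two_mul_sum_card_coincidences_le {M q n : ℕ} (hM : 0 < M) (hq : 2 ≤ q)
    (h : 2 * M * n ^ 2 ≤ q ^ ((n - 1) / 2)) :
    2 * ∑ k ∈ range n, ∑ l ∈ range k, #(coincidences G (∑ i ∈ range n, q ^ i) M q k l) ≤
      ∑ i ∈ range n, q ^ i := by
  rcases Nat.eq_zero_or_pos n with rfl | hn
  · simp
  set P := ∑ i ∈ range n, q ^ i
  have hPdvd : P ∣ q ^ n - 1 := Dvd.intro _ (geom_sum_mul_of_one_le (by omega) n)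
  have hPge : q ^ (n - 1) ≤ P :=
    single_le_sum (f := (q ^ ·)) (fun _ _ ↦ Nat.zero_le _) (mem_range.2 (by omega))
  have hP : 0 < P := (pow_pos (by omega) _).trans_le hPge
  have hterm : ∀ k ∈ range n, ∀ l ∈ range k, #(coincidences G P M q k l) ≤ M * q ^ (n / 2) := by
    intro k hk l hl
    rw [mem_range] at hk hl
    exact (card_coincidences_le hP hM (by omega) (Nat.coprime_geom_sum hn.ne') hl.le).trans
      (Nat.mul_le_mul_left M (Nat.gcd_pow_sub_one_le_pow_half hq hPdvd (by omega) (by omega)))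
  have hsum : ∑ k ∈ range n, ∑ l ∈ range k, #(coincidences G P M q k l) ≤
      n * (n * (M * q ^ (n / 2))) := by
    refine (sum_le_card_nsmul (range n) _ (n * (M * q ^ (n / 2))) fun k hk ↦ ?_).trans_eq
      (by rw [card_range, smul_eq_mul])
    refine (sum_le_card_nsmul _ _ _ (hterm k hk)).trans ?_
    simpa using Nat.mul_le_mul_right _ (mem_range.1 hk).le
  calc 2 * ∑ k ∈ range n, ∑ l ∈ range k, #(coincidences G P M q k l)
      ≤ 2 * (n * (n * (M * q ^ (n / 2)))) := Nat.mul_le_mul_left 2 hsum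
    _ = 2 * M * n ^ 2 * q ^ (n / 2) := by ring
    _ ≤ q ^ ((n - 1) / 2) * q ^ (n / 2) := Nat.mul_le_mul_right _ h
    _ = q ^ (n - 1) := by rw [← pow_add]; congr 1; omega
    _ ≤ P := hPge

theorem two_mul_sum_card_coincidences_le_of_eq_two {M q : ℕ} (hM : 0 < M) (hq : 2 ≤ q)
    (h : 4 * M ≤ q) :
    2 * ∑ k ∈ range 2, ∑ l ∈ range k, #(coincidences G (∑ i ∈ range 2, q ^ i) M q k l) ≤
      ∑ i ∈ range 2, q ^ i := by
  have hP : ∑ i ∈ range 2, q ^ i = q + 1 := by simp [sum_range_succ, add_comm]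
  have hgcd : Nat.gcd (q - 1) (q + 1) ≤ 2 := by
    refine Nat.le_of_dvd two_pos ?_
    have := Nat.dvd_sub (Nat.gcd_dvd_right (q - 1) (q + 1)) (Nat.gcd_dvd_left (q - 1) (q + 1))
    rwa [show q + 1 - (q - 1) = 2 by omega] at this
  have hcard := card_coincidences_le (G := G) (P := q + 1) (M := M) (k := 1) (l := 0)
    (by omega) hM (by omega) (hP ▸ Nat.coprime_geom_sum two_ne_zero) (by omega)
  simp only [sum_range_succ, sum_range_zero, hP] at hcard ⊢
  simp only [pow_one, tsub_zero] at hcard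
  nlinarith

theorem sum_pow_le_two_mul_card_image_pow_regular {M q n : ℕ} (hM : 0 < M) (hq : 2 ≤ q)
    (hG : Fintype.card G = q ^ n - 1)
    (h : 2 * M * n ^ 2 ≤ q ^ ((n - 1) / 2) ∨ n = 2 ∧ 4 * M ≤ q) :
    ∑ i ∈ range n, q ^ i ≤ 2 * M * #((regular G (∑ i ∈ range n, q ^ i) M q n).image (· ^ M)) := by
  have htorus : #({x : G | x ^ (∑ i ∈ range n, q ^ i) = 1} : Finset G) = ∑ i ∈ range n, q ^ i :=
    IsCyclic.card_filter_pow_eq_one_of_dvd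
      (hG ▸ Dvd.intro _ (geom_sum_mul_of_one_le (by omega) n))
  have hcoinc : 2 * ∑ k ∈ range n, ∑ l ∈ range k,
      #(coincidences G (∑ i ∈ range n, q ^ i) M q k l) ≤ ∑ i ∈ range n, q ^ i := by
    rcases h with h | ⟨rfl, h⟩
    · exact two_mul_sum_card_coincidences_le hM hq h
    · exact two_mul_sum_card_coincidences_le_of_eq_two hM hq h
  have hreg := IsCyclic.card_le_mul_card_image_pow (regular G (∑ i ∈ range n, q ^ i) M q n) hM
  have hsplit := card_torus_le (G := G) (∑ i ∈ range n, q ^ i) M q n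
  rw [htorus] at hsplit
  nlinarith

end SingerTorus

theorem Matrix.card_specialLinearGroup_le (ι K : Type*) [Fintype ι] [DecidableEq ι] [CommRing K]
    [Fintype K] :
    Nat.card (SpecialLinearGroup ι K) ≤ Fintype.card K ^ (Fintype.card ι * Fintype.card ι) := by
  calc Nat.card (SpecialLinearGroup ι K) ≤ Nat.card (Matrix ι ι K) :=
        Nat.card_le_card_of_injective _ Subtype.val_injective
    _ = _ := by simp [Nat.card_eq_fintype_card, Matrix, pow_mul]

theorem exists_pos_forall_le_pow_mul_self (M : ℕ) : ∃ N : ℕ, 0 < N ∧ ∀ q n : ℕ, 2 ≤ q → 2 ≤ n →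
    N ≤ q ^ (n * n) → 2 * M * n ^ 2 ≤ q ^ ((n - 1) / 2) ∨ n = 2 ∧ 4 * M ≤ q := by
  -- for `n ≥ n₀` the exponent `k = (n - 1) / 2` satisfies `n ≤ 3 k` and `18 M ≤ k`
  set n₀ := 36 * M + 40
  refine ⟨(2 * M * n₀ ^ 2 + 1) ^ (n₀ * n₀), by positivity, fun q n hq hn hN ↦ ?_⟩
  rcases lt_or_ge n n₀ with hlt | hge
  · have hqC : 2 * M * n₀ ^ 2 + 1 ≤ q := by
      refine (Nat.pow_le_pow_iff_left (by positivity)).1 (hN.trans ?_)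
      exact Nat.pow_le_pow_right (by omega) (Nat.mul_le_mul hlt.le hlt.le)
    rcases hn.eq_or_lt with rfl | hn₃
    · refine Or.inr ⟨rfl, le_trans ?_ hqC⟩
      have : 2 ≤ n₀ ^ 2 := by nlinarith
      nlinarith
    · left
      calc 2 * M * n ^ 2 ≤ 2 * M * n₀ ^ 2 := by gcongr
        _ ≤ q := by omega
        _ ≤ q ^ ((n - 1) / 2) := Nat.le_self_pow (by omega) q
  · left
    set k := (n - 1) / 2
    calc 2 * M * n ^ 2 ≤ 2 * M * (3 * k) ^ 2 := by gcongr; omega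
      _ = 18 * M * k ^ 2 := by ring
      _ ≤ k * k ^ 2 := by gcongr; omega
      _ = k ^ 3 := by ring
      _ ≤ 2 ^ k := Nat.pow_three_le_two_pow (by omega)
      _ ≤ q ^ k := Nat.pow_le_pow_left hq k

/-- For every `M ≥ 1` there is `N = N(M) > 0` such that whenever `q` is a
prime power (the cardinality of a finite field `Fq`), `n ≥ 2`, `|SL_n(F_q)| ≥ N`, and `F` is
a finite field with `q^n` elements, the set of regular semisimple values
`{λ^M : λ ∈ F^×, λ^{(q^n-1)/(q-1)} = 1, λ^{M q^k} ≠ λ^{M q^l} for all 0 ≤ l < k ≤ n-1}`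
has cardinality at least `(q^n - 1)/(2 M (q - 1))`. -/
theorem regular_power_values_singer_torus (M : ℕ) (hM : 0 < M) :
    ∃ N : ℕ, 0 < N ∧
      ∀ (Fq : Type) [Field Fq] [Fintype Fq] (F : Type) [Field F] [Fintype F] (n : ℕ),
        2 ≤ n → Fintype.card F = Fintype.card Fq ^ n →
        Nat.card (Matrix.SpecialLinearGroup (Fin n) Fq) ≥ N →
        (Nat.card {y : Fˣ | ∃ lam : Fˣ,
            lam ^ ((Fintype.card Fq ^ n - 1) / (Fintype.card Fq - 1)) = 1 ∧
            (∀ k l : ℕ, l < k → k ≤ n - 1 →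
              lam ^ (M * Fintype.card Fq ^ k) ≠ lam ^ (M * Fintype.card Fq ^ l)) ∧
            y = lam ^ M} : ℝ) ≥
          ((Fintype.card Fq ^ n - 1 : ℕ) : ℝ) /
            ((2 * M * (Fintype.card Fq - 1) : ℕ) : ℝ) := by
  obtain ⟨N, hN, hthreshold⟩ := exists_pos_forall_le_pow_mul_self M
  refine ⟨N, hN, fun Fq _ _ F _ _ n hn hF hSL ↦ ?_⟩
  classical
  set q := Fintype.card Fq
  have hq : 2 ≤ q := Fintype.one_lt_card
  have hNq : N ≤ q ^ (n * n) := by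
    simpa using hSL.trans (Matrix.card_specialLinearGroup_le (Fin n) Fq)
  have hbound := SingerTorus.sum_pow_le_two_mul_card_image_pow_regular (G := Fˣ) hM hq
    (by rw [Fintype.card_units, hF]) (hthreshold q n hq hn hNq)
  rw [← Nat.geomSum_eq hq, ← SingerTorus.coe_image_pow_regular, Nat.card_coe_set_eq,
    Set.ncard_coe_finset, ge_iff_le,
    div_le_iff₀ (Nat.cast_pos.2 (Nat.mul_pos (by positivity) (by omega))),
    ← geom_sum_mul_of_one_le (by omega) n]
  exact_mod_cast (Nat.mul_le_mul_right (q - 1) hbound).trans_eq (by ring)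
end

section
/- Let p be a prime, q a power of p, M ≥ 1, n ≥ 2, and let i be an integer with n/2 ≤ i ≤ n − 1. Let K be an algebraic closure of F_p. Then the number of pairs (λ, μ) ∈ K^× × K^× satisfying λ^{q^i − 1} = 1 and μ^{q^{n−i} − 1} = 1 for which there exist integers 0 ≤ k ≤ i − 1 and 0 ≤ l ≤ n − i − 1 with λ^{M·q^k} = μ^{M·q^l} is at most i·(n−i)·M·(q^{n−i} − 1). -/
/-!
Write `q = p ^ e`. If `λ ^ (q ^ i - 1) = 1` and `λ ^ (M q ^ k) = ν`, then since `q ^ k` is coprime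
to `q ^ i - 1`, any two such `λ` differ by an `M`-th root of unity. So once `k < i`, `l < n - i`
and the `(q ^ (n - i) - 1)`-th root of unity `μ` are fixed, there are at most `M` choices of `λ`
with `λ ^ (M q ^ k) = μ ^ (M q ^ l)`.
-/

theorem Nat.coprime_pow_pow_sub_one {q i : ℕ} (hq : 0 < q) (hi : 0 < i) (k : ℕ) :
    (q ^ k).Coprime (q ^ i - 1) := by
  have hqi : (q ^ i).Coprime (q ^ i - 1) :=
    (Nat.coprime_self_sub_right (Nat.one_le_pow _ _ hq)).mpr (Nat.coprime_one_right _)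
  exact (hqi.coprime_dvd_left (dvd_pow_self q hi.ne')).pow_left k

theorem div_pow_eq_one_of_pow_mul_eq {G : Type*} [CommGroup G] {N M t : ℕ} {x y : G}
    (hx : x ^ N = 1) (hy : y ^ N = 1) (ht : t.Coprime N)
    (hxy : x ^ (M * t) = y ^ (M * t)) : (x / y) ^ M = 1 := by
  have hN : (x / y) ^ N = 1 := by rw [div_pow, hx, hy, div_one]
  have hMt : (x / y) ^ (M * t) = 1 := by rw [div_pow, hxy, div_self']
  obtain ⟨c, hc⟩ : Nat.gcd (M * t) N ∣ M := by
    rw [Nat.Coprime.gcd_mul_right_cancel M ht]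
    exact Nat.gcd_dvd_left M N
  rw [hc, pow_mul, pow_gcd_eq_one.mpr ⟨hMt, hN⟩, one_pow]

section CommMonoid

variable {R : Type*} [CommMonoid R]

theorem exists_injective_rootsOfUnity_of_coprime {N M t : ℕ} (ht : t.Coprime N) (ν : Rˣ) :
    ∃ f : {y : Rˣ | y ^ N = 1 ∧ y ^ (M * t) = ν} → rootsOfUnity M R, Function.Injective f := by
  rcases isEmpty_or_nonempty {y : Rˣ | y ^ N = 1 ∧ y ^ (M * t) = ν} with h | ⟨y₀, hy₀N, hy₀ν⟩
  · exact ⟨isEmptyElim, fun y ↦ isEmptyElim y⟩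
  refine ⟨fun y ↦ ⟨y / y₀, ?_⟩, fun y y' h ↦ ?_⟩
  · exact (mem_rootsOfUnity _ _).mpr
      (div_pow_eq_one_of_pow_mul_eq y.2.1 hy₀N ht (y.2.2.trans hy₀ν.symm))
  · exact Subtype.ext (div_left_injective (congrArg Subtype.val h))

theorem card_pow_mul_collisions_le {N B M a c : ℕ} {t s : ℕ → ℕ}
    [Finite (rootsOfUnity B R)] [Finite (rootsOfUnity M R)] (ht : ∀ k < a, (t k).Coprime N) :
    Nat.card {x : Rˣ × Rˣ | x.1 ^ N = 1 ∧ x.2 ^ B = 1 ∧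
        ∃ k l : ℕ, k < a ∧ l < c ∧ x.1 ^ (M * t k) = x.2 ^ (M * s l)} ≤
      a * c * Nat.card (rootsOfUnity B R) * Nat.card (rootsOfUnity M R) := by
  classical
  have := Fintype.ofFinite (rootsOfUnity B R)
  let J := Fin a × Fin c × rootsOfUnity B R
  let fiber (j : J) : Set Rˣ :=
    {y | y ^ N = 1 ∧ y ^ (M * t j.1) = (j.2.2 : Rˣ) ^ (M * s j.2.1)}
  have hfiber (j : J) : ∃ f : fiber j → rootsOfUnity M R, Function.Injective f :=
    exists_injective_rootsOfUnity_of_coprime (ht j.1 j.1.2) _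
  have (j : J) : Finite (fiber j) := have ⟨f, hf⟩ := hfiber j; Finite.of_injective f hf
  set S := {x : Rˣ × Rˣ | x.1 ^ N = 1 ∧ x.2 ^ B = 1 ∧
        ∃ k l : ℕ, k < a ∧ l < c ∧ x.1 ^ (M * t k) = x.2 ^ (M * s l)}
  choose k l hk hl hkl using fun x : S ↦ x.2.2.2
  let Φ (x : S) : Σ j : J, fiber j :=
    ⟨(⟨k x, hk x⟩, ⟨l x, hl x⟩, ⟨x.1.2, (mem_rootsOfUnity _ _).mpr x.2.2.1⟩), ⟨x.1.1, x.2.1, hkl x⟩⟩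
  have hΦ : Function.Injective Φ :=
    Function.Injective.of_comp (f := fun z ↦ ((z.2 : Rˣ), (z.1.2.2 : Rˣ))) Subtype.val_injective
  calc Nat.card S ≤ Nat.card (Σ j : J, fiber j) := Nat.card_le_card_of_injective Φ hΦ
    _ = ∑ j : J, Nat.card (fiber j) := Nat.card_sigma
    _ ≤ ∑ _j : J, Nat.card (rootsOfUnity M R) := Finset.sum_le_sum fun j _ ↦
        have ⟨f, hf⟩ := hfiber j; Nat.card_le_card_of_injective f hf
    _ = a * c * Nat.card (rootsOfUnity B R) * Nat.card (rootsOfUnity M R) := by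
      rw [Finset.sum_const, Finset.card_univ, smul_eq_mul, ← Nat.card_eq_fintype_card]
      simp only [J, Nat.card_prod, Nat.card_fin, mul_assoc]

end CommMonoid

theorem count_mixed_collisions_general (p e M n i : ℕ) [Fact p.Prime] (he : 1 ≤ e) (hM : 1 ≤ M)
    (hn : 2 ≤ n) (hi2 : i ≤ n - 1) :
    Nat.card {x : (AlgebraicClosure (ZMod p))ˣ × (AlgebraicClosure (ZMod p))ˣ |
        x.1 ^ ((p ^ e) ^ i - 1) = 1 ∧ x.2 ^ ((p ^ e) ^ (n - i) - 1) = 1 ∧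
        ∃ k l : ℕ, k < i ∧ l < n - i ∧
          x.1 ^ (M * (p ^ e) ^ k) = x.2 ^ (M * (p ^ e) ^ l)} ≤
      i * (n - i) * M * ((p ^ e) ^ (n - i) - 1) := by
  set K := AlgebraicClosure (ZMod p)
  set q := p ^ e
  have hq : 1 < q := Nat.one_lt_pow (by omega) (Fact.out : p.Prime).one_lt
  have : NeZero M := ⟨by omega⟩
  have : NeZero (q ^ (n - i) - 1) := ⟨by have := Nat.one_lt_pow (by omega : n - i ≠ 0) hq; omega⟩
  calc _ ≤ i * (n - i) * Nat.card (rootsOfUnity (q ^ (n - i) - 1) K) *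
        Nat.card (rootsOfUnity M K) :=
      card_pow_mul_collisions_le fun k hk ↦ Nat.coprime_pow_pow_sub_one (by omega) (by omega) k
    _ ≤ i * (n - i) * (q ^ (n - i) - 1) * M := by
      gcongr <;> exact card_rootsOfUnity _ _
    _ = i * (n - i) * M * (q ^ (n - i) - 1) := mul_right_comm _ _ _

/-- Let `p` be prime, `q = p^e`, `M ≥ 1`, `n ≥ 2`, `n/2 ≤ i ≤ n - 1`, and let
`K` be an algebraic closure of `F_p`.  The number of pairs `(λ, μ) ∈ K^× × K^×` with
`λ^{q^i - 1} = 1`, `μ^{q^{n-i} - 1} = 1` for which `λ^{M q^k} = μ^{M q^l}` for some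
`0 ≤ k ≤ i - 1`, `0 ≤ l ≤ n - i - 1`, is at most `i (n - i) M (q^{n-i} - 1)`. -/
theorem count_mixed_collisions (p e M n i : ℕ) [Fact p.Prime] (he : 1 ≤ e) (hM : 1 ≤ M)
    (hn : 2 ≤ n) (hi1 : n ≤ 2 * i) (hi2 : i ≤ n - 1) :
    Nat.card {x : (AlgebraicClosure (ZMod p))ˣ × (AlgebraicClosure (ZMod p))ˣ |
        x.1 ^ ((p ^ e) ^ i - 1) = 1 ∧ x.2 ^ ((p ^ e) ^ (n - i) - 1) = 1 ∧
        ∃ k l : ℕ, k < i ∧ l < n - i ∧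
          x.1 ^ (M * (p ^ e) ^ k) = x.2 ^ (M * (p ^ e) ^ l)} ≤
      i * (n - i) * M * ((p ^ e) ^ (n - i) - 1) :=
  count_mixed_collisions_general p e M n i he hM hn hi2
end

section
/- Let p be a prime, l an odd positive integer, n ≥ 2 with gcd(l, n) = 1, and q = p^l. Let n = n_1 + n_2 + ⋯ + n_s be a partition of n with s ≥ 2 parts, and set M = p^n − 1. For 1 ≤ i ≤ s define d_i = lcm over all 1 ≤ j_1 < ⋯ < j_i ≤ s of gcd(q^{n_{j_1}} − 1, …, q^{n_{j_i}} − 1), and set d = gcd(n, q − 1) and d' = gcd(n/gcd(n_1, …, n_s), q − 1). Assume (as holds for the image in PSL_n(q) of the corresponding maximal torus of SL_n(q)) that d' divides d_{s−1} and that d·(q − 1) divides d'·d_s, and let T be the abelian group Z_{d_1} × ⋯ × Z_{d_{s−2}} × Z_{d_{s−1}/d'} × Z_{d'·d_s/(d·(q−1))}. Then the image of the M-th power map on T has cardinality at most |T|·n/(p − 1). -/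
/-!
The image of the `M`-th power map on a product of cyclic groups `∏ Z_{e_i}` is the product of
the images `M • Z_{e_i}`, and `M • Z_{e_i}` has order `e_i / gcd(e_i, M)`; so it suffices to
find one factor with `gcd(e_i, M) ≥ (p - 1) / n`. The first factor works: `p - 1` divides
`q^{n_1} - 1`, hence `d_1`, and also `M = p^n - 1`; in the case `s = 2` the first factor is
`d_1 / d'`, which costs at most the factor `d' ≤ n`.
-/

theorem ZMod.card_range_nsmul_mul_gcd (k M : ℕ) [NeZero k] :
    Nat.card (Set.range fun x : ZMod k => M • x) * k.gcd M = k := by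
  have hrange : (Set.range fun x : ZMod k => M • x) = AddSubgroup.zmultiples (M : ZMod k) := by
    ext y
    simp only [Set.mem_range, SetLike.mem_coe, AddSubgroup.mem_zmultiples_iff]
    constructor
    · rintro ⟨x, rfl⟩
      exact ⟨x.val, by rw [zsmul_eq_mul, Int.cast_natCast, ZMod.natCast_zmod_val, nsmul_eq_mul,
        mul_comm]⟩
    · rintro ⟨z, rfl⟩
      exact ⟨z, by rw [zsmul_eq_mul, nsmul_eq_mul, mul_comm]⟩
  rw [hrange, SetLike.coe_sort_coe, Nat.card_zmultiples, ZMod.addOrderOf_coe M (NeZero.ne k),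
    Nat.div_mul_cancel (Nat.gcd_dvd_left k M)]

theorem card_range_nsmul_pi_zmod_mul_gcd_le {ι : Type*} [Fintype ι] (e : ι → ℕ)
    (he : ∀ i, e i ≠ 0) (M : ℕ) (j : ι) :
    Nat.card (Set.range fun t : (∀ i, ZMod (e i)) => M • t) * (e j).gcd M ≤
      Nat.card (∀ i, ZMod (e i)) := by
  classical
  have : ∀ i, NeZero (e i) := fun i => ⟨he i⟩
  set c : ι → ℕ := fun i => Nat.card (Set.range fun x : ZMod (e i) => M • x)
  have hc : ∀ i, c i * (e i).gcd M = e i := fun i => ZMod.card_range_nsmul_mul_gcd (e i) M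
  have hc_le : ∀ i, c i ≤ e i := fun i => (hc i).le.trans' <|
    Nat.le_mul_of_pos_right _ (Nat.gcd_pos_of_pos_left _ (Nat.pos_of_ne_zero (he i)))
  have hcard : Nat.card (Set.range fun t : (∀ i, ZMod (e i)) => M • t) = ∏ i, c i := by
    rw [show (fun t : (∀ i, ZMod (e i)) => M • t) = Pi.map fun i (x : ZMod (e i)) => M • x
      from rfl, Set.range_piMap, Nat.card_congr (Equiv.Set.univPi _), Nat.card_pi]
  rw [hcard, Nat.card_pi, ← Finset.mul_prod_erase _ c (Finset.mem_univ j)]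
  simp only [Nat.card_zmod]
  rw [← Finset.mul_prod_erase _ e (Finset.mem_univ j), mul_right_comm, hc j]
  exact Nat.mul_le_mul_left _ (Finset.prod_le_prod' fun i _ => hc_le i)

theorem card_range_nsmul_pi_zmod_le_div {ι : Type*} [Fintype ι] (e : ι → ℕ)
    (he : ∀ i, e i ≠ 0) (M : ℕ) (j : ι) {c k : ℕ} (hc : 0 < c)
    (hck : c ≤ k * (e j).gcd M) :
    (Nat.card (Set.range fun t : (∀ i, ZMod (e i)) => M • t) : ℝ) ≤
      Nat.card (∀ i, ZMod (e i)) * k / c := by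
  rw [le_div_iff₀ (by exact_mod_cast hc)]
  exact_mod_cast calc
    _ ≤ Nat.card (Set.range fun t : (∀ i, ZMod (e i)) => M • t) * (k * (e j).gcd M) :=
      Nat.mul_le_mul_left _ hck
    _ = k * (Nat.card (Set.range fun t : (∀ i, ZMod (e i)) => M • t) * (e j).gcd M) := by ring
    _ ≤ k * Nat.card (∀ i, ZMod (e i)) :=
      Nat.mul_le_mul_left _ (card_range_nsmul_pi_zmod_mul_gcd_le e he M j)
    _ = _ := mul_comm _ _

theorem Nat.gcd_dvd_mul_gcd_div {a b m : ℕ} (hb : b ∣ a) : a.gcd m ∣ b * (a / b).gcd m := by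
  conv_lhs => rw [← Nat.mul_div_cancel' hb]
  rw [← Nat.gcd_mul_left]
  exact Nat.gcd_dvd_gcd_mul_left_right _ _ _

section LcmGcdPowersetCard

variable {ι : Type*} [Fintype ι] (f : ι → ℕ)

theorem lcm_gcd_powersetCard_pos (hf : ∀ j, 0 < f j) {i : ℕ} (hi : 1 ≤ i) :
    0 < (Finset.powersetCard i Finset.univ).lcm fun A => A.gcd f := by
  refine Nat.pos_of_ne_zero fun h0 => ?_
  obtain ⟨A, hA, hA0⟩ := Finset.lcm_eq_zero_iff.mp h0
  obtain ⟨a, ha⟩ : A.Nonempty := by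
    rw [← Finset.card_pos, (Finset.mem_powersetCard.mp hA).2]; omega
  exact (hf a).ne' (Finset.gcd_eq_zero_iff.mp hA0 a ha)

theorem dvd_lcm_gcd_powersetCard_one (j : ι) :
    f j ∣ (Finset.powersetCard 1 Finset.univ).lcm fun A => A.gcd f := by
  have hmem : {j} ∈ Finset.powersetCard 1 (Finset.univ : Finset ι) :=
    Finset.mem_powersetCard.mpr ⟨Finset.subset_univ _, Finset.card_singleton _⟩
  simpa using Finset.dvd_lcm (f := fun A : Finset ι => A.gcd f) hmem

end LcmGcdPowersetCard

theorem power_image_torus_PSL_upper_bound_general (p l n s : ℕ) (hp : p.Prime) (hl : Odd l)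
    (hn : 2 ≤ n) (hs : 2 ≤ s)
    (nn : Fin s → ℕ) (hnn : ∀ j, 1 ≤ nn j) (hsum : ∑ j, nn j = n) :
    let q := p ^ l
    let M := p ^ n - 1
    let D : ℕ → ℕ := fun i =>
      Finset.lcm (Finset.powersetCard i (Finset.univ : Finset (Fin s)))
        (fun A => A.gcd fun j => q ^ nn j - 1)
    let d := Nat.gcd n (q - 1)
    let d' := Nat.gcd (n / Finset.univ.gcd nn) (q - 1)
    d' ∣ D (s - 1) → d * (q - 1) ∣ d' * D s →
    let e : Fin s → ℕ := fun i =>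
      if (i : ℕ) < s - 2 then D ((i : ℕ) + 1)
      else if (i : ℕ) = s - 2 then D (s - 1) / d'
      else d' * D s / (d * (q - 1))
    (Nat.card (Set.range fun t : (∀ i : Fin s, ZMod (e i)) => M • t) : ℝ) ≤
      (Nat.card (∀ i : Fin s, ZMod (e i)) : ℝ) * (n : ℝ) / ((p : ℝ) - 1) := by
  intro q M D d d' hd' hds e
  have hq : 2 ≤ q := Nat.one_lt_pow (by rintro rfl; simp at hl) hp.two_le
  have hD : ∀ i, 1 ≤ i → 0 < D i := fun i =>
    lcm_gcd_powersetCard_pos _ fun j =>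
      Nat.sub_pos_of_lt (Nat.one_lt_pow (Nat.one_le_iff_ne_zero.mp (hnn j)) hq)
  have hd'_dvd_n : d' ∣ n := (Nat.gcd_dvd_left _ _).trans <| Nat.div_dvd_of_dvd <|
    hsum ▸ Finset.dvd_sum fun j hj => Finset.gcd_dvd hj
  have hd'_pos : 0 < d' := Nat.gcd_pos_of_pos_right _ (by omega)
  have he : ∀ i, e i ≠ 0 := by
    intro i
    simp only [e]
    split_ifs
    · exact (hD _ (by omega)).ne'
    · exact (Nat.div_pos (Nat.le_of_dvd (hD _ (by omega)) hd') hd'_pos).ne'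
    · exact (Nat.div_pos (Nat.le_of_dvd (Nat.mul_pos hd'_pos (hD s (by omega))) hds)
        (Nat.mul_pos (Nat.gcd_pos_of_pos_left _ (by omega)) (by omega))).ne'
  set j₀ : Fin s := ⟨0, by omega⟩
  have hD1_gcd : (D 1).gcd M ∣ d' * (e j₀).gcd M := by
    rcases (show 2 < s ∨ s = 2 by omega) with hs3 | rfl
    · have he₀ : e j₀ = D 1 := if_pos (by simp [j₀]; omega)
      rw [he₀]
      exact dvd_mul_left _ _
    · exact Nat.gcd_dvd_mul_gcd_div hd'
  have hp_dvd : p - 1 ∣ (D 1).gcd M := by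
    have hq_pow : p - 1 ∣ q ^ nn j₀ - 1 := by
      simpa only [q, ← pow_mul] using Nat.sub_one_dvd_pow_sub_one p (l * nn j₀)
    exact Nat.dvd_gcd (hq_pow.trans (dvd_lcm_gcd_powersetCard_one _ j₀))
      (Nat.sub_one_dvd_pow_sub_one p n)
  have hkey : p - 1 ≤ n * (e j₀).gcd M := calc
    p - 1 ≤ d' * (e j₀).gcd M := Nat.le_of_dvd
      (Nat.mul_pos hd'_pos (Nat.gcd_pos_of_pos_left _ (Nat.pos_of_ne_zero (he j₀))))
      (hp_dvd.trans hD1_gcd)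
    _ ≤ n * (e j₀).gcd M := Nat.mul_le_mul_right _ (Nat.le_of_dvd (by omega) hd'_dvd_n)
  have := card_range_nsmul_pi_zmod_le_div e he M j₀ (Nat.sub_pos_of_lt hp.one_lt) hkey
  rwa [Nat.cast_sub hp.one_le, Nat.cast_one] at this

/-- Let `p` be prime, `l` odd, `n ≥ 2` with `gcd(l, n) = 1`, `q = p^l`, and
let `n = n_1 + ⋯ + n_s` (`s ≥ 2`) be a partition of `n`; set `M = p^n - 1`.  With
`d_i = lcm_{1 ≤ j_1 < ⋯ < j_i ≤ s} gcd(q^{n_{j_1}} - 1, …, q^{n_{j_i}} - 1)`,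
`d = gcd(n, q-1)`, `d' = gcd(n / gcd(n_1, …, n_s), q-1)`, assume `d' ∣ d_{s-1}` and
`d (q-1) ∣ d' d_s`, and let
`T = Z_{d_1} × ⋯ × Z_{d_{s-2}} × Z_{d_{s-1}/d'} × Z_{d' d_s/(d (q-1))}`.
Then the image of the `M`-th power map on `T` has cardinality at most `|T| n / (p - 1)`. -/
theorem power_image_torus_PSL_upper_bound (p l n s : ℕ) (hp : p.Prime) (hl : Odd l)
    (hn : 2 ≤ n) (hcop : Nat.gcd l n = 1) (hs : 2 ≤ s)
    (nn : Fin s → ℕ) (hnn : ∀ j, 1 ≤ nn j) (hsum : ∑ j, nn j = n) :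
    let q := p ^ l
    let M := p ^ n - 1
    let D : ℕ → ℕ := fun i =>
      Finset.lcm (Finset.powersetCard i (Finset.univ : Finset (Fin s)))
        (fun A => A.gcd fun j => q ^ nn j - 1)
    let d := Nat.gcd n (q - 1)
    let d' := Nat.gcd (n / Finset.univ.gcd nn) (q - 1)
    d' ∣ D (s - 1) → d * (q - 1) ∣ d' * D s →
    let e : Fin s → ℕ := fun i =>
      if (i : ℕ) < s - 2 then D ((i : ℕ) + 1)
      else if (i : ℕ) = s - 2 then D (s - 1) / d'
      else d' * D s / (d * (q - 1))
    (Nat.card (Set.range fun t : (∀ i : Fin s, ZMod (e i)) => M • t) : ℝ) ≤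
      (Nat.card (∀ i : Fin s, ZMod (e i)) : ℝ) * (n : ℝ) / ((p : ℝ) - 1) :=
  power_image_torus_PSL_upper_bound_general p l n s hp hl hn hs nn hnn hsum
end
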